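/- arXiv:2605.26367 — 2 statements merged into one kernel-verified Lean document; each statement's English description precedes it below -/
import Mathlib

section
/- Let N and O be finite nonempty sets, d ≥ 1 an integer, and for each j ∈ O let m_j and c_j be integers with 0 ≤ m_j and c_j ≥ 1. Then every extreme point of the polytope R = {μ ∈ [0,1]^{N×O} : ∑_{j∈O} μ_{ij} = d for every i ∈ N, and m_j ≤ ∑_{i∈N} μ_{ij} ≤ c_j for every j ∈ O} has all of its entries in {0,1}. -/
/-!
A sum of finitely many reals that is an integer cannot have exactly one non-integral summand.
So in the bipartite graph whose edges are the non-integral entries of `μ ∈ R`, every agent and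
every object with a binding capacity constraint has degree `0` or at least `2`. Counting the
edges from both sides shows that there are fewer binding equality constraints than edges (when
every object met by an edge is binding, one agent constraint follows from the others, because
the row sums and the column sums have the same total). Hence a nonzero `δ` supported on the
edges preserves all binding constraints, `μ ± t • δ ∈ R` for small `t`, and `μ` is not extreme.
-/

open Finset Filter Topology

theorem exists_ne_zero_forall_apply_eq_zero_of_card_lt_finrank {K V κ : Type*} [Field K]
    [AddCommGroup V] [Module K V] [FiniteDimensional K V] [Fintype κ] (f : κ → Module.Dual K V)
    (h : Fintype.card κ < Module.finrank K V) : ∃ v : V, v ≠ 0 ∧ ∀ k, f k v = 0 := by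
  obtain ⟨v, hv, hv0⟩ := Submodule.exists_mem_ne_zero_of_ne_bot
    (LinearMap.ker_ne_bot_of_finrank_lt (f := LinearMap.pi f) (by simpa using h))
  exact ⟨v, hv0, fun k => congrFun (LinearMap.mem_ker.1 hv) k⟩

theorem AddSubgroup.card_filter_notMem_ne_one_of_sum_mem {ι M : Type*} [AddCommGroup M]
    (G : AddSubgroup M) [DecidablePred (· ∈ G)] (s : Finset ι) (f : ι → M) (hs : ∑ x ∈ s, f x ∈ G) :
    #{x ∈ s | f x ∉ G} ≠ 1 := by
  classical
  intro h
  obtain ⟨k, hk⟩ := Finset.card_eq_one.1 h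
  have hks : k ∈ s ∧ f k ∉ G := mem_filter.1 (hk ▸ mem_singleton_self k)
  have hrest : ∑ x ∈ s.erase k, f x ∈ G := sum_mem fun x hx => by
    by_contra hx'
    have : x ∈ ({k} : Finset ι) := hk ▸ mem_filter.2 ⟨mem_of_mem_erase hx, hx'⟩
    exact ne_of_mem_erase hx (mem_singleton.1 this)
  rw [← add_sum_erase s f hks.1] at hs
  exact hks.2 (by simpa using G.sub_mem hs hrest)

theorem two_mul_card_add_card_le_sum {ι : Type*} [Fintype ι] (g : ι → ℕ) (U : Set ι)
    [DecidablePred (· ∈ U)] (hU : ∀ x ∈ U, g x ≠ 1) :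
    2 * #{x | x ∈ U ∧ g x ≠ 0} + #{x | x ∉ U ∧ g x ≠ 0} ≤ ∑ x, g x := by
  simp only [card_filter, mul_sum, ← sum_add_distrib]
  refine sum_le_sum fun x _ => ?_
  have := hU x
  split_ifs <;> grind

theorem eq_zero_of_mem_extremePoints_of_eventually_add_smul_mem {E : Type*} [AddCommGroup E]
    [Module ℝ E] {A : Set E} {x v : E} (hx : x ∈ A.extremePoints ℝ)
    (h : ∀ᶠ t in 𝓝 (0 : ℝ), x + t • v ∈ A) : v = 0 := by
  have hneg : ∀ᶠ t in 𝓝 (0 : ℝ), x + (-t) • v ∈ A :=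
    (continuous_neg.tendsto' 0 0 neg_zero).eventually h
  obtain ⟨t, ⟨hadd, hsub⟩, ht⟩ :=
    ((h.and hneg).filter_mono nhdsWithin_le_nhds |>.and
      (self_mem_nhdsWithin (s := {0}ᶜ))).exists
  have hmid : x ∈ openSegment ℝ (x + t • v) (x + (-t) • v) :=
    ⟨1 / 2, 1 / 2, by norm_num, by norm_num, by norm_num, by module⟩
  simpa [show t ≠ 0 from ht] using hx.2 hadd hsub hmid

theorem eventually_add_mul_mem_Icc {a b l u : ℝ} (ha : a ∈ Set.Icc l u)
    (hb : b ≠ 0 → a ∈ Set.Ioo l u) :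
    ∀ᶠ t in 𝓝 0, a + t * b ∈ Set.Icc l u := by
  by_cases hb0 : b = 0
  · simp [hb0, ha]
  have : Tendsto (fun t => a + t * b) (𝓝 0) (𝓝 a) :=
    (continuous_const.add (continuous_id.mul continuous_const)).tendsto' 0 a (by simp)
  exact (this.eventually (Ioo_mem_nhds (hb hb0).1 (hb hb0).2)).mono
    fun _ ht => Set.Ioo_subset_Icc_self ht

section Bipartite

variable {α β : Type*} [Fintype α] [Fintype β] (P : α → β → Prop) [DecidableRel P]

theorem card_filter_prod_eq_sum_rows : #{p : α × β | P p.1 p.2} = ∑ a, #{b | P a b} := by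
  simp only [card_filter, Fintype.sum_prod_type]

theorem card_filter_prod_eq_sum_cols : #{p : α × β | P p.1 p.2} = ∑ b, #{a | P a b} := by
  simp only [card_filter, Fintype.sum_prod_type_right]

theorem two_mul_card_rows_le (hrow : ∀ a, #{b | P a b} ≠ 1) :
    2 * #{a | ∃ b, P a b} ≤ #{p : α × β | P p.1 p.2} := by
  simpa [card_filter_prod_eq_sum_rows] using
    two_mul_card_add_card_le_sum (fun a => #{b | P a b}) Set.univ (fun a _ => hrow a)

theorem two_mul_card_tight_add_card_slack_le (T : Set β) [DecidablePred (· ∈ T)]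
    (hcol : ∀ b ∈ T, #{a | P a b} ≠ 1) :
    2 * #{b | b ∈ T ∧ ∃ a, P a b} + #{b | b ∉ T ∧ ∃ a, P a b} ≤ #{p : α × β | P p.1 p.2} := by
  simpa [card_filter_prod_eq_sum_cols] using
    two_mul_card_add_card_le_sum (fun b => #{a | P a b}) T hcol

theorem exists_ne_zero_of_card_add_card_lt (A : Finset α) (B : Finset β)
    (h : #A + #B < #{p : α × β | P p.1 p.2}) :
    ∃ δ : α → β → ℝ, δ ≠ 0 ∧ (∀ a b, ¬P a b → δ a b = 0) ∧ (∀ a ∈ A, ∑ b, δ a b = 0) ∧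
      ∀ b ∈ B, ∑ a, δ a b = 0 := by
  let ev (a : α) (b : β) : Module.Dual ℝ (α → β → ℝ) :=
    (LinearMap.proj (R := ℝ) (φ := fun _ : β => ℝ) b).comp
      (LinearMap.proj (φ := fun _ : α => β → ℝ) a)
  let f : A ⊕ B ⊕ {p : α × β // ¬P p.1 p.2} → Module.Dual ℝ (α → β → ℝ)
    | .inl a => ∑ b, ev a b
    | .inr (.inl b) => ∑ a, ev a b
    | .inr (.inr p) => ev p.1.1 p.1.2
  have hcard : Fintype.card (A ⊕ B ⊕ {p : α × β // ¬P p.1 p.2}) <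
      Module.finrank ℝ (α → β → ℝ) := by
    have := card_filter_add_card_filter_not (s := (univ : Finset (α × β))) (fun p => P p.1 p.2)
    simp only [Fintype.card_sum, Fintype.card_coe, Fintype.card_subtype,
      Module.finrank_pi_fintype, Module.finrank_self, sum_const, card_univ, Fintype.card_prod,
      smul_eq_mul, mul_one] at this ⊢
    omega
  obtain ⟨δ, hδ0, hδ⟩ := exists_ne_zero_forall_apply_eq_zero_of_card_lt_finrank f hcard
  refine ⟨δ, hδ0, fun a b hab => ?_, fun a ha => ?_, fun b hb => ?_⟩
  · simpa [f, ev] using hδ (.inr (.inr ⟨(a, b), hab⟩))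
  · simpa [f, ev] using hδ (.inl ⟨a, ha⟩)
  · simpa [f, ev] using hδ (.inr (.inl ⟨b, hb⟩))

theorem rowSum_eq_zero_of_forall_ne_of_colSum_eq_zero {δ : α → β → ℝ} (a₀ : α)
    (hrows : ∀ a ≠ a₀, ∑ b, δ a b = 0) (hcols : ∀ b, ∑ a, δ a b = 0) : ∑ b, δ a₀ b = 0 := by
  have htotal : ∑ a, ∑ b, δ a b = 0 := by
    rw [sum_comm]
    exact sum_eq_zero fun b _ => hcols b
  rwa [sum_eq_single a₀ (fun a _ ha => hrows a ha) (by simp)] at htotal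

theorem exists_ne_zero_rowSum_colSum_eq_zero (T : Set β) (hP : ∃ a b, P a b)
    (hrow : ∀ a, #{b | P a b} ≠ 1) (hcol : ∀ b ∈ T, #{a | P a b} ≠ 1) :
    ∃ δ : α → β → ℝ, δ ≠ 0 ∧ (∀ a b, ¬P a b → δ a b = 0) ∧ (∀ a, ∑ b, δ a b = 0) ∧
      ∀ b ∈ T, ∑ a, δ a b = 0 := by
  classical
  set rows : Finset α := {a | ∃ b, P a b}
  set tight : Finset β := {b | b ∈ T ∧ ∃ a, P a b}
  set slack : Finset β := {b | b ∉ T ∧ ∃ a, P a b}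
  have hrows : 2 * #rows ≤ #{p : α × β | P p.1 p.2} := two_mul_card_rows_le P hrow
  have hcols : 2 * #tight + #slack ≤ #{p : α × β | P p.1 p.2} :=
    two_mul_card_tight_add_card_slack_le P T hcol
  have hrow_zero (δ : α → β → ℝ) (hδ : ∀ a b, ¬P a b → δ a b = 0) (a : α) (ha : a ∉ rows) :
      ∑ b, δ a b = 0 :=
    sum_eq_zero fun b _ => hδ a b fun hab => ha (by simpa [rows] using ⟨b, hab⟩)
  have hcol_zero (δ : α → β → ℝ) (hδ : ∀ a b, ¬P a b → δ a b = 0)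
      (htight : ∀ b ∈ tight, ∑ a, δ a b = 0) (b : β) (hb : b ∉ slack) : ∑ a, δ a b = 0 := by
    by_cases hPb : ∃ a, P a b
    · have hbT : b ∈ T := by_contra fun hbT => hb (by simpa [slack] using ⟨hbT, hPb⟩)
      exact htight b (by simpa [tight] using ⟨hbT, hPb⟩)
    · exact sum_eq_zero fun a _ => hδ a b fun hab => hPb ⟨a, hab⟩
  rcases (#slack).eq_zero_or_pos with hslack | hslack
  · -- every column met by `P` is constrained, so the constraint of one row is redundant
    obtain ⟨a₀, ha₀⟩ : ∃ a₀, a₀ ∈ rows := by simpa [rows] using hP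
    obtain ⟨δ, hδ0, hδ, hδrows, hδtight⟩ :=
      exists_ne_zero_of_card_add_card_lt P (rows.erase a₀) tight (by
        have := card_erase_add_one ha₀
        omega)
    have hcols_zero (b : β) : ∑ a, δ a b = 0 :=
      hcol_zero δ hδ hδtight b (by simp [card_eq_zero.1 hslack])
    have hrows_zero (a : α) (ha : a ≠ a₀) : ∑ b, δ a b = 0 := by
      by_cases ha' : a ∈ rows
      · exact hδrows a (mem_erase.2 ⟨ha, ha'⟩)
      · exact hrow_zero δ hδ a ha'
    refine ⟨δ, hδ0, hδ, fun a => ?_, fun b _ => hcols_zero b⟩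
    by_cases ha : a = a₀
    · exact ha ▸ rowSum_eq_zero_of_forall_ne_of_colSum_eq_zero a₀ hrows_zero hcols_zero
    · exact hrows_zero a ha
  · obtain ⟨δ, hδ0, hδ, hδrows, hδtight⟩ :=
      exists_ne_zero_of_card_add_card_lt P rows tight (by omega)
    refine ⟨δ, hδ0, hδ, fun a => ?_,
      fun b hb => hcol_zero δ hδ hδtight b (by simp [slack, hb])⟩
    by_cases ha : a ∈ rows
    · exact hδrows a ha
    · exact hrow_zero δ hδ a ha

end Bipartite

def allocationPolytope {N O : Type*} [Fintype N] [Fintype O] (d : ℝ) (m c : O → ℝ) :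
    Set (N → O → ℝ) :=
  {μ | (∀ i j, μ i j ∈ Set.Icc 0 1) ∧ (∀ i, ∑ j, μ i j = d) ∧
    ∀ j, ∑ i, μ i j ∈ Set.Icc (m j) (c j)}

section AllocationPolytope

variable {N O : Type*} [Fintype N] [Fintype O] {d : ℝ} {m c : O → ℝ}

theorem eventually_add_smul_mem_allocationPolytope {μ δ : N → O → ℝ}
    (hμ : μ ∈ allocationPolytope d m c) (hδ : ∀ i j, δ i j ≠ 0 → μ i j ∈ Set.Ioo 0 1)
    (hrow : ∀ i, ∑ j, δ i j = 0)
    (hcol : ∀ j, ∑ i, δ i j ≠ 0 → ∑ i, μ i j ∈ Set.Ioo (m j) (c j)) :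
    ∀ᶠ t in 𝓝 (0 : ℝ), μ + t • δ ∈ allocationPolytope d m c := by
  obtain ⟨hμ01, hμrow, hμcol⟩ := hμ
  have hentries := fun i j => eventually_add_mul_mem_Icc (hμ01 i j) (hδ i j)
  have hcols := fun j => eventually_add_mul_mem_Icc (hμcol j) (hcol j)
  filter_upwards [eventually_all.2 fun i => eventually_all.2 (hentries i),
    eventually_all.2 hcols] with t ht hct
  refine ⟨ht, fun i => ?_, fun j => ?_⟩
  · simp [sum_add_distrib, ← mul_sum, hrow, hμrow]
  · simpa [sum_add_distrib, ← mul_sum] using hct j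

theorem mem_Ioo_of_mem_Icc_of_notMem {G : AddSubgroup ℝ} {a b x : ℝ} (ha : a ∈ G)
    (hb : b ∈ G) (hx : x ∈ Set.Icc a b) (hxG : x ∉ G) : x ∈ Set.Ioo a b :=
  ⟨hx.1.lt_of_ne (by rintro rfl; exact hxG ha), hx.2.lt_of_ne (by rintro rfl; exact hxG hb)⟩

theorem mem_of_mem_extremePoints_allocationPolytope (G : AddSubgroup ℝ) (h1 : (1 : ℝ) ∈ G)
    (hd : d ∈ G) (hm : ∀ j, m j ∈ G) (hc : ∀ j, c j ∈ G) {μ : N → O → ℝ}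
    (hμ : μ ∈ (allocationPolytope d m c).extremePoints ℝ) (i : N) (j : O) : μ i j ∈ G := by
  classical
  obtain ⟨hμ01, hμrow, hμcol⟩ := hμ.1
  by_contra hij
  obtain ⟨δ, hδ0, hδ, hδrow, hδcol⟩ := exists_ne_zero_rowSum_colSum_eq_zero
    (fun i j => μ i j ∉ G) {j | ∑ i, μ i j ∉ Set.Ioo (m j) (c j)} ⟨i, j, hij⟩
    (fun i => G.card_filter_notMem_ne_one_of_sum_mem univ (μ i) (by rw [hμrow i]; exact hd))
    (fun j hj => G.card_filter_notMem_ne_one_of_sum_mem univ (μ · j) (by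
      by_contra h
      exact hj (mem_Ioo_of_mem_Icc_of_notMem (hm j) (hc j) (hμcol j) h)))
  refine hδ0 (eq_zero_of_mem_extremePoints_of_eventually_add_smul_mem hμ
    (eventually_add_smul_mem_allocationPolytope hμ.1 (fun i j hδij => ?_) hδrow
      fun j hδj => ?_))
  · exact mem_Ioo_of_mem_Icc_of_notMem G.zero_mem h1 (hμ01 i j)
      (not_not.1 (mt (hδ i j) hδij))
  · exact not_not.1 (mt (hδcol j) hδj)

end AllocationPolytope

theorem extremePoints_R_integral_general
    {N O : Type*} [Fintype N] [Fintype O]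
    (d : ℕ) (m c : O → ℤ)
    (R : Set (N → O → ℝ))
    (hR : R = {μ : N → O → ℝ | (∀ i j, 0 ≤ μ i j ∧ μ i j ≤ 1) ∧
      (∀ i, ∑ j, μ i j = d) ∧
      (∀ j, (m j : ℝ) ≤ ∑ i, μ i j ∧ ∑ i, μ i j ≤ c j)}) :
    ∀ μ ∈ R.extremePoints ℝ, ∀ i j, μ i j = 0 ∨ μ i j = 1 := by
  subst hR
  intro μ hμ i j
  obtain ⟨z, hz⟩ := mem_of_mem_extremePoints_allocationPolytope (Int.castAddHom ℝ).range
    ⟨1, by simp⟩ ⟨(d : ℤ), by simp⟩ (fun j => ⟨m j, rfl⟩) (fun j => ⟨c j, rfl⟩) hμ i j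
  have h01 := hμ.1.1 i j
  simp only [Int.coe_castAddHom] at hz
  rw [← hz] at h01 ⊢
  obtain ⟨h0, h1⟩ : 0 ≤ z ∧ z ≤ 1 := by exact_mod_cast h01
  interval_cases z <;> simp

/-- Every extreme point of the polytope `R` of random allocations
(with demand equalities and minimum/capacity constraints) has all entries in
`{0,1}`. -/
theorem extremePoints_R_integral
    {N O : Type*} [Fintype N] [Fintype O] [Nonempty N] [Nonempty O]
    (d : ℕ) (hd : 1 ≤ d) (m c : O → ℤ)
    (hm : ∀ j, 0 ≤ m j) (hc : ∀ j, 1 ≤ c j)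
    (R : Set (N → O → ℝ))
    (hR : R = {μ : N → O → ℝ | (∀ i j, 0 ≤ μ i j ∧ μ i j ≤ 1) ∧
      (∀ i, ∑ j, μ i j = d) ∧
      (∀ j, (m j : ℝ) ≤ ∑ i, μ i j ∧ ∑ i, μ i j ≤ c j)}) :
    ∀ μ ∈ R.extremePoints ℝ, ∀ i j, μ i j = 0 ∨ μ i j = 1 :=
  extremePoints_R_integral_general d m c R hR
end

section
/- Fix a market with unit demand d = 1, a truthful preference profile ≻, a distinguished agent 1 with ≻_1-most-preferred object a and misreport ≻'_1, an MPS eating profile e for ≻ and an MPS eating profile e' for ≻' = (≻'_1, (≻_i)_{i≠1}). If t_a > τ, then τ' ≤ τ. -/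
open MeasureTheory Finset
open scoped Classical

/-- The amount of probability of objects in `S` consumed up to time `t`
under the eating profile `e`:  `μ_S(t,e) = ∫_0^t |{i : e_i(s) ∈ S}| ds`. -/
noncomputable def eatenAmt {N O : Type*} [Fintype N]
    (e : N → ℝ → O) (S : Set O) (t : ℝ) : ℝ :=
  ∫ s in (0:ℝ)..t, ((Finset.univ.filter (fun i => e i s ∈ S)).card : ℝ)

/-- The final allocation of the eating profile `e`:
`μ_{ij} = ∫_0^1 1{e_i(s) = j} ds`. -/
noncomputable def finalAlloc {N O : Type*} (e : N → ℝ → O) (i : N) (j : O) : ℝ :=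
  ∫ s in (0:ℝ)..1, (if e i s = j then (1:ℝ) else 0)

/-- `f` is a right-continuous step function on `[0,1)`: there is a finite set
of breakpoints, and `f` is constant on the stretches between them. -/
def RightContStep {O : Type*} (f : ℝ → O) : Prop :=
  ∃ B : Finset ℝ, ∀ t ∈ Set.Ico (0:ℝ) 1, ∀ s ∈ Set.Ico (0:ℝ) 1,
    t ≤ s → (∀ b ∈ B, ¬ (t < b ∧ b ≤ s)) → f s = f t

/-- Object `j` satisfies the capacity condition (Cap) at `(t,e)`. -/
def CapOK {N O : Type*} [Fintype N] (c : O → ℕ)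
    (e : N → ℝ → O) (j : O) (t : ℝ) : Prop :=
  eatenAmt e {j} t < c j

/-- Object `j` satisfies the global minimums condition (Global) at `(t,e)`. -/
def GlobalOK {N O : Type*} [Fintype N] [Fintype O] (m : O → ℕ)
    (e : N → ℝ → O) (j : O) (t : ℝ) : Prop :=
  ∃ ε > 0, max (m j : ℝ) (eatenAmt e {j} t + ε) +
      ∑ k ∈ Finset.univ.erase j, max (m k : ℝ) (eatenAmt e {k} t) ≤
    (Fintype.card N : ℝ)

/-- Object `j` is available at `(t,e)`. -/
def Available {N O : Type*} [Fintype N] [Fintype O] (m c : O → ℕ)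
    (e : N → ℝ → O) (j : O) (t : ℝ) : Prop :=
  CapOK c e j t ∧ GlobalOK m e j t

/-- `e` is an MPS eating profile for the strict preference profile `P`:
each `e_i` is a right-continuous step function and, at every time
`t ∈ [0,1)`, `e_i(t)` is available and is `i`'s most preferred object among
the available ones. -/
def IsMPS {N O : Type*} [Fintype N] [Fintype O] (m c : O → ℕ)
    (P : N → O → O → Prop) (e : N → ℝ → O) : Prop :=
  (∀ i, RightContStep (e i)) ∧
  ∀ i, ∀ t ∈ Set.Ico (0:ℝ) 1,
    Available m c e (e i t) t ∧
    ∀ j, Available m c e j t → j ≠ e i t → P i (e i t) j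

/-- The closing time `t_j` of object `j` under `e` (with `inf ∅ = 1`). -/
noncomputable def closeTime {N O : Type*} [Fintype N] [Fintype O] (m c : O → ℕ)
    (e : N → ℝ → O) (j : O) : ℝ :=
  sInf ({t ∈ Set.Icc (0:ℝ) 1 | ¬ Available m c e j t} ∪ {1})

/-- The time `τ` at which the global minimums condition starts binding
under `e` (with `inf ∅ = 1`). -/
noncomputable def globalTime {N O : Type*} [Fintype N] [Fintype O] (m : O → ℕ)
    (e : N → ℝ → O) : ℝ :=
  sInf ({t ∈ Set.Icc (0:ℝ) 1 | ∃ j : O, ¬ GlobalOK m e j t} ∪ {1})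

/-- `x` first-order stochastically dominates `y` for the strict preference
`Pi`. -/
def FOSD {O : Type*} [Fintype O] (Pi : O → O → Prop) (x y : O → ℝ) : Prop :=
  ∀ o : O, ∑ j ∈ Finset.univ.filter (fun j => Pi j o ∨ j = o), y j ≤
    ∑ j ∈ Finset.univ.filter (fun j => Pi j o ∨ j = o), x j

/-!
While agent `i₀` is still eating `a` and the minimums constraint binds in neither run, the
misreport can only speed up the consumption of every object `k ≠ a`. Indeed, at a moment where
both runs have consumed equally much of `k` and at least as much of every other `j ≠ a` under the
misreport, an agent eating `k` truthfully but `j` after the misreport would find `k` still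
available in the second run and `j` still available in the first, so would prefer each to the
other. The consumed amounts are continuous, so the constraint binds at `τ` itself in the truthful
run, necessarily through an object other than `a` (which is still available); with every such
object consumed at least as much under the misreport, it binds at `τ` in that run too.
-/

open Filter Topology

section StepFunction

variable {O : Type*} {f : ℝ → O}

theorem RightContStep.eventually_eq_nhdsGE (hf : RightContStep f) {t : ℝ}
    (ht : t ∈ Set.Ico (0:ℝ) 1) : ∀ᶠ s in 𝓝[≥] t, f s = f t := by
  obtain ⟨B, hB⟩ := hf
  have hbreak : ∀ᶠ s in 𝓝 t, ∀ b ∈ B, t < b → s < b :=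
    (eventually_all_finset B).2 fun b _ => by
      by_cases htb : t < b
      · filter_upwards [Iio_mem_nhds htb] with s hs _ using hs
      · exact Eventually.of_forall fun _ h => absurd h htb
  filter_upwards [self_mem_nhdsWithin, nhdsWithin_le_nhds (Iio_mem_nhds ht.2),
    nhdsWithin_le_nhds hbreak] with s (hts : t ≤ s) (hs1 : s < 1) hs
  exact hB t ht s ⟨ht.1.trans hts, hs1⟩ hts fun b hb ⟨htb, hbs⟩ => (hs b hb htb).not_ge hbs

theorem RightContStep.exists_finset_eventually_eq (hf : RightContStep f) :
    ∃ B : Finset ℝ, ∀ t ∈ Set.Ioo (0:ℝ) 1, t ∉ B → ∀ᶠ s in 𝓝 t, f s = f t := by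
  obtain ⟨B, hB⟩ := hf
  refine ⟨B, fun t ht htB => ?_⟩
  have hside : ∀ᶠ s in 𝓝 t, ∀ b ∈ B, (t < b → s < b) ∧ (b < t → b < s) :=
    (eventually_all_finset B).2 fun b hb => by
      rcases lt_trichotomy t b with htb | rfl | hbt
      · filter_upwards [Iio_mem_nhds htb] with s hs
        exact ⟨fun _ => hs, fun h => absurd h htb.not_gt⟩
      · exact absurd hb htB
      · filter_upwards [Ioi_mem_nhds hbt] with s hs
        exact ⟨fun h => absurd h hbt.not_gt, fun _ => hs⟩
  filter_upwards [Ioo_mem_nhds ht.1 ht.2, hside] with s hs hsB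
  rcases le_total t s with hts | hst
  · exact hB t (Set.Ioo_subset_Ico_self ht) s (Set.Ioo_subset_Ico_self hs) hts
      fun b hb ⟨htb, hbs⟩ => ((hsB b hb).1 htb).not_ge hbs
  · refine (hB s (Set.Ioo_subset_Ico_self hs) t (Set.Ioo_subset_Ico_self ht) hst
      fun b hb ⟨hsb, hbt⟩ => ?_).symm
    exact ((hsB b hb).2 (hbt.lt_of_ne fun h => htB (h ▸ hb))).not_gt hsb

end StepFunction

section EatenAmount

variable {N O : Type*} [Fintype N] {e e' : N → ℝ → O}

noncomputable def eaterCount (e : N → ℝ → O) (S : Set O) (s : ℝ) : ℝ :=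
  ((Finset.univ.filter (fun i => e i s ∈ S)).card : ℝ)

theorem eatenAmt_eq_integral (e : N → ℝ → O) (S : Set O) (t : ℝ) :
    eatenAmt e S t = ∫ s in (0:ℝ)..t, eaterCount e S s :=
  rfl

theorem eaterCount_nonneg (e : N → ℝ → O) (S : Set O) (s : ℝ) : 0 ≤ eaterCount e S s :=
  Nat.cast_nonneg _

theorem eaterCount_le_card (e : N → ℝ → O) (S : Set O) (s : ℝ) :
    eaterCount e S s ≤ Fintype.card N := by
  unfold eaterCount
  exact_mod_cast Finset.card_filter_le _ _

theorem eaterCount_eventuallyEq {l : Filter ℝ} {S : Set O} {t : ℝ}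
    (h : ∀ᶠ s in l, ∀ i, e i s = e i t) :
    eaterCount e S =ᶠ[l] fun _ => eaterCount e S t := by
  filter_upwards [h] with s hs
  simp only [eaterCount, hs]

theorem integrableOn_eaterCount (he : ∀ i, RightContStep (e i)) (S : Set O) :
    IntegrableOn (eaterCount e S) (Set.Icc 0 1) := by
  choose B hB using fun i => (he i).exists_finset_eventually_eq
  set U := Set.Ioo (0:ℝ) 1 \ ↑(Finset.univ.biUnion B)
  have hcont : ContinuousOn (eaterCount e S) U := fun t ht =>
    have hloc : ∀ᶠ s in 𝓝 t, ∀ i, e i s = e i t := eventually_all.2 fun i =>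
      hB i t ht.1 fun h => ht.2 (Finset.mem_biUnion.2 ⟨i, Finset.mem_univ _, h⟩)
    (continuousAt_const.congr (eaterCount_eventuallyEq hloc).symm).continuousWithinAt
  have hU : U =ᵐ[volume] Set.Icc (0:ℝ) 1 := by
    refine ae_eq_set.2 ⟨?_, ?_⟩
    · rw [Set.sdiff_eq_empty.2 (Set.sdiff_subset.trans Set.Ioo_subset_Icc_self), measure_empty]
    · refine measure_mono_null (t := {0, 1} ∪ ↑(Finset.univ.biUnion B)) ?_
        ((Set.toFinite _).measure_zero _)
      rintro t ⟨⟨h0, h1⟩, htU⟩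
      by_contra hne
      simp only [Set.mem_union, Set.mem_insert_iff, Set.mem_singleton_iff, not_or] at hne
      exact htU ⟨⟨h0.lt_of_ne' hne.1.1, h1.lt_of_ne hne.1.2⟩, hne.2⟩
  have hmeas := hcont.aestronglyMeasurable (μ := volume)
    (isOpen_Ioo.sdiff (Finset.finite_toSet _).isClosed).measurableSet
  rw [Measure.restrict_congr_set hU] at hmeas
  refine Integrable.of_bound hmeas (Fintype.card N) (Eventually.of_forall fun s => ?_)
  rw [Real.norm_of_nonneg (eaterCount_nonneg e S s)]
  exact eaterCount_le_card e S s

theorem continuousOn_eatenAmt (he : ∀ i, RightContStep (e i)) (S : Set O) :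
    ContinuousOn (eatenAmt e S) (Set.Icc 0 1) := by
  have h := intervalIntegral.continuousOn_primitive_interval (μ := volume) (a := 0) (b := 1)
    (f := eaterCount e S) (by rw [Set.uIcc_of_le zero_le_one]; exact integrableOn_eaterCount he S)
  rwa [Set.uIcc_of_le zero_le_one] at h

theorem eatenAmt_eq_add_mul_of_const (he : ∀ i, RightContStep (e i)) (S : Set O) {x t : ℝ}
    (hx : 0 ≤ x) (hxt : x ≤ t) (ht : t ≤ 1)
    (hconst : ∀ s ∈ Set.Ico x t, ∀ i, e i s = e i x) :
    eatenAmt e S t = eatenAmt e S x + (t - x) * eaterCount e S x := by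
  have hsub : ∀ {a b : ℝ}, 0 ≤ a → a ≤ 1 → 0 ≤ b → b ≤ 1 →
      IntervalIntegrable (eaterCount e S) volume a b := fun ha0 ha1 hb0 hb1 =>
    ((integrableOn_eaterCount he S).mono_set
      (Set.uIcc_subset_Icc ⟨ha0, ha1⟩ ⟨hb0, hb1⟩)).intervalIntegrable
  have hpiece : ∫ s in x..t, eaterCount e S s = (t - x) * eaterCount e S x := by
    rw [intervalIntegral.integral_of_le hxt, integral_Ioc_eq_integral_Ioo,
      setIntegral_congr_fun measurableSet_Ioo (g := fun _ => eaterCount e S x)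
        fun s hs => by simp only [eaterCount, hconst s (Set.Ioo_subset_Ico_self hs)],
      setIntegral_const, Real.volume_real_Ioo_of_le hxt, smul_eq_mul]
  rw [eatenAmt_eq_integral, eatenAmt_eq_integral, ← hpiece,
    intervalIntegral.integral_add_adjacent_intervals
      (hsub le_rfl zero_le_one hx (hxt.trans ht)) (hsub hx (hxt.trans ht) (hx.trans hxt) ht)]

theorem eatenAmt_le_of_eaterCount_le (he : ∀ i, RightContStep (e i))
    (he' : ∀ i, RightContStep (e' i)) (S : Set O) {x u t : ℝ} (hx : 0 ≤ x) (hu : u ≤ 1)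
    (hconst : ∀ s ∈ Set.Ico x u, (∀ i, e i s = e i x) ∧ ∀ i, e' i s = e' i x)
    (h0 : eatenAmt e S x ≤ eatenAmt e' S x) (hrate : eaterCount e S x ≤ eaterCount e' S x)
    (ht : t ∈ Set.Icc x u) : eatenAmt e S t ≤ eatenAmt e' S t := by
  have hc : ∀ s ∈ Set.Ico x t, (∀ i, e i s = e i x) ∧ ∀ i, e' i s = e' i x :=
    fun s hs => hconst s ⟨hs.1, hs.2.trans_le ht.2⟩
  rw [eatenAmt_eq_add_mul_of_const he S hx ht.1 (ht.2.trans hu) fun s hs => (hc s hs).1,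
    eatenAmt_eq_add_mul_of_const he' S hx ht.1 (ht.2.trans hu) fun s hs => (hc s hs).2]
  exact add_le_add h0 (mul_le_mul_of_nonneg_left hrate (sub_nonneg.2 ht.1))

theorem tendsto_eatenAmt_nhdsGT (he : ∀ i, RightContStep (e i)) (S : Set O) {x : ℝ}
    (hx : x ∈ Set.Ico (0:ℝ) 1) : Tendsto (eatenAmt e S) (𝓝[>] x) (𝓝 (eatenAmt e S x)) :=
  (continuousOn_eatenAmt he S x (Set.Ico_subset_Icc_self hx)).mono_of_mem_nhdsWithin
    (mem_of_superset (Ioo_mem_nhdsGT hx.2) fun _ hs => ⟨hx.1.trans hs.1.le, hs.2.le⟩)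

end EatenAmount

section GlobalCondition

theorem exists_pos_max_add_le_iff {p u R n : ℝ} :
    (∃ ε > 0, max p (u + ε) + R ≤ n) ↔ max p u + R < n ∨ (u < p ∧ p + R ≤ n) := by
  constructor
  · rintro ⟨ε, hε, h⟩
    rcases lt_or_ge u p with hup | hpu
    · exact Or.inr ⟨hup, by linarith [le_max_left p (u + ε)]⟩
    · rw [max_eq_right hpu]
      exact Or.inl (by linarith [le_max_right p (u + ε)])
  · rintro (h | ⟨hup, h⟩)
    · refine ⟨n - (max p u + R), by linarith, ?_⟩
      have : max p (u + (n - (max p u + R))) ≤ max p u + (n - (max p u + R)) :=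
        max_le (by linarith [le_max_left p u]) (by linarith [le_max_right p u])
      linarith
    · exact ⟨p - u, by linarith, by rwa [add_sub_cancel, max_self]⟩

variable {N O : Type*} [Fintype N] [Fintype O] {m : O → ℕ} {e e' : N → ℝ → O} {t : ℝ}

noncomputable def globalLoad (m : O → ℕ) (e : N → ℝ → O) (t : ℝ) : ℝ :=
  ∑ k, max (m k : ℝ) (eatenAmt e {k} t)

theorem not_globalOK_iff {j : O} :
    ¬ GlobalOK m e j t ↔ (Fintype.card N : ℝ) ≤ globalLoad m e t ∧
      ((m j : ℝ) ≤ eatenAmt e {j} t ∨ (Fintype.card N : ℝ) < globalLoad m e t) := by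
  rw [GlobalOK, exists_pos_max_add_le_iff, globalLoad,
    ← Finset.add_sum_erase _ _ (Finset.mem_univ j)]
  rcases le_or_gt (m j : ℝ) (eatenAmt e {j} t) with h | h
  · rw [max_eq_right h]
    constructor
    · intro hn
      push Not at hn
      exact ⟨hn.1, Or.inl h⟩
    · rintro ⟨hn, -⟩ (hlt | ⟨hlt, -⟩) <;> linarith
  · rw [max_eq_left h.le]
    constructor
    · intro hn
      push Not at hn
      exact ⟨hn.1, Or.inr (hn.2 h)⟩
    · rintro ⟨hn, hμ | hlt⟩ (h1 | ⟨-, h2⟩) <;> linarith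

theorem exists_not_globalOK_iff (hm : ∑ k, m k ≤ Fintype.card N) :
    (∃ j, ¬ GlobalOK m e j t) ↔ (Fintype.card N : ℝ) ≤ globalLoad m e t ∧
      ∃ j, (m j : ℝ) ≤ eatenAmt e {j} t := by
  refine ⟨fun ⟨j, hj⟩ => ?_,
    fun ⟨hn, j, hj⟩ => ⟨j, not_globalOK_iff.2 ⟨hn, Or.inl hj⟩⟩⟩
  obtain ⟨hn, hj | hlt⟩ := not_globalOK_iff.1 hj
  · exact ⟨hn, j, hj⟩
  refine ⟨hn, ?_⟩
  by_contra! hall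
  have hload : globalLoad m e t = ∑ k, (m k : ℝ) :=
    Finset.sum_congr rfl fun k _ => max_eq_left (hall k).le
  have hm' : ∑ k, (m k : ℝ) ≤ Fintype.card N := by exact_mod_cast hm
  linarith

theorem continuousOn_globalLoad (he : ∀ i, RightContStep (e i)) :
    ContinuousOn (globalLoad m e) (Set.Icc 0 1) :=
  continuousOn_finsetSum _ fun k _ =>
    ContinuousOn.sup continuousOn_const (continuousOn_eatenAmt he {k})

theorem isClosed_setOf_exists_not_globalOK (he : ∀ i, RightContStep (e i))
    (hm : ∑ k, m k ≤ Fintype.card N) :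
    IsClosed {t ∈ Set.Icc (0:ℝ) 1 | ∃ j, ¬ GlobalOK m e j t} := by
  set L := {t ∈ Set.Icc (0:ℝ) 1 | (Fintype.card N : ℝ) ≤ globalLoad m e t}
  have hload : IsClosed L :=
    isClosed_Icc.isClosed_le continuousOn_const (continuousOn_globalLoad he)
  have hfail : ∀ j, IsClosed {t ∈ L | (m j : ℝ) ≤ eatenAmt e {j} t} := fun j =>
    hload.isClosed_le continuousOn_const ((continuousOn_eatenAmt he {j}).mono fun _ ht => ht.1)
  convert isClosed_iUnion_of_finite hfail using 1
  ext t
  simp only [exists_not_globalOK_iff hm, Set.mem_ofPred_eq, Set.mem_iUnion, L]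
  tauto

theorem not_globalOK_of_eatenAmt_le {a j : O} (hj : ¬ GlobalOK m e j t) (ha : GlobalOK m e a t)
    (hle : ∀ k, k ≠ a → eatenAmt e {k} t ≤ eatenAmt e' {k} t) : ¬ GlobalOK m e' j t := by
  obtain ⟨hn, hj⟩ := not_globalOK_iff.1 hj
  have ha' : ¬ ((m a : ℝ) ≤ eatenAmt e {a} t ∨ (Fintype.card N : ℝ) < globalLoad m e t) :=
    fun h => not_globalOK_iff.2 ⟨hn, h⟩ ha
  have hja : j ≠ a := by
    rintro rfl
    exact ha' hj
  have hload : globalLoad m e t ≤ globalLoad m e' t := Finset.sum_le_sum fun k _ => by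
    by_cases hka : k = a
    · subst hka
      rw [max_eq_left (le_of_not_ge fun h => ha' (Or.inl h))]
      exact le_max_left _ _
    · exact max_le_max le_rfl (hle k hka)
  exact not_globalOK_iff.2 ⟨hn.trans hload,
    hj.imp (fun h => h.trans (hle j hja)) fun h => h.trans_le hload⟩

end GlobalCondition

section FirstTime

/-- `closeTime` and `globalTime` are, definitionally, `firstTime` of the failure predicates. -/
noncomputable def firstTime (p : ℝ → Prop) : ℝ :=
  sInf ({t ∈ Set.Icc (0:ℝ) 1 | p t} ∪ {1})

variable {p : ℝ → Prop}

theorem bddBelow_firstTime_set : BddBelow ({t ∈ Set.Icc (0:ℝ) 1 | p t} ∪ {1}) :=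
  ⟨0, by rintro t (ht | rfl); exacts [ht.1.1, zero_le_one]⟩

theorem firstTime_le_one : firstTime p ≤ 1 :=
  csInf_le bddBelow_firstTime_set (Or.inr rfl)

theorem firstTime_nonneg : 0 ≤ firstTime p :=
  le_csInf ⟨1, Or.inr rfl⟩ (by rintro t (ht | rfl); exacts [ht.1.1, zero_le_one])

theorem firstTime_le {t : ℝ} (ht : t ∈ Set.Icc (0:ℝ) 1) (hp : p t) : firstTime p ≤ t :=
  csInf_le bddBelow_firstTime_set (Or.inl ⟨ht, hp⟩)

theorem not_of_lt_firstTime {t : ℝ} (ht0 : 0 ≤ t) (ht : t < firstTime p) : ¬ p t :=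
  fun hp => (firstTime_le ⟨ht0, ht.le.trans firstTime_le_one⟩ hp).not_gt ht

theorem firstTime_mem (hp : IsClosed {t ∈ Set.Icc (0:ℝ) 1 | p t}) (h1 : firstTime p < 1) :
    p (firstTime p) := by
  set A := {t ∈ Set.Icc (0:ℝ) 1 | p t}
  change sInf (A ∪ {1}) < 1 at h1
  change p (sInf (A ∪ {1}))
  have hbdd : BddBelow A := ⟨0, fun t ht => ht.1.1⟩
  obtain ⟨s, hs⟩ : A.Nonempty := by
    refine Set.nonempty_iff_ne_empty.2 fun hA => h1.ne ?_
    rw [hA, Set.empty_union, csInf_singleton]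
  have hinf : sInf (A ∪ {1}) = sInf A := by
    rw [csInf_union hbdd ⟨s, hs⟩ bddBelow_singleton (Set.singleton_nonempty 1),
      csInf_singleton, inf_eq_left]
    exact (csInf_le hbdd hs).trans hs.1.2
  exact hinf ▸ (hp.csInf_mem ⟨s, hs⟩ hbdd).2

end FirstTime

section Times

variable {N O : Type*} [Fintype N] [Fintype O] {m c : O → ℕ} {e : N → ℝ → O} {t : ℝ}

theorem available_of_lt_closeTime {j : O} (ht0 : 0 ≤ t) (ht : t < closeTime m c e j) :
    Available m c e j t :=
  not_not.1 (not_of_lt_firstTime ht0 ht)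

theorem globalOK_of_lt_globalTime (ht0 : 0 ≤ t) (ht : t < globalTime m e) (j : O) :
    GlobalOK m e j t :=
  not_not.1 fun h => not_of_lt_firstTime ht0 ht ⟨j, h⟩

end Times

theorem IsClosed.setOf_forall_le {X α ι : Type*} [TopologicalSpace X] [TopologicalSpace α]
    [Preorder α] [OrderClosedTopology α] {s : Set X} (hs : IsClosed s) {f g : ι → X → α}
    (hf : ∀ i, ContinuousOn (f i) s) (hg : ∀ i, ContinuousOn (g i) s) :
    IsClosed {x ∈ s | ∀ i, f i x ≤ g i x} :=
  hs.isClosed_le (continuousOn_pi.2 hf) (continuousOn_pi.2 hg)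

section Misreport

variable {N O : Type*} [Fintype N] [Fintype O] {m c : O → ℕ} {P P' : N → O → O → Prop}
  {e e' : N → ℝ → O} {t : ℝ}

theorem IsMPS.eq_of_available_of_forall_prefers (he : IsMPS m c P e) {i : N} [Std.Asymm (P i)]
    {a : O} (ht : t ∈ Set.Ico (0:ℝ) 1) (ha : ∀ j, j ≠ a → P i a j)
    (hav : Available m c e a t) : e i t = a := by
  by_contra hne
  exact asymm (ha _ hne) ((he.2 i t ht).2 a hav (Ne.symm hne))

theorem IsMPS.eq_of_eatenAmt_eq (he : IsMPS m c P e) (he' : IsMPS m c P' e') {i₀ : N}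
    (hPP : ∀ i, i ≠ i₀ → P' i = P i) [∀ i, Std.Asymm (P i)] (ht : t ∈ Set.Ico (0:ℝ) 1)
    (hglob : ∀ j, GlobalOK m e j t) (hglob' : ∀ j, GlobalOK m e' j t)
    (hle : ∀ j, j ≠ e i₀ t → eatenAmt e {j} t ≤ eatenAmt e' {j} t) {i : N}
    (hk : e i t ≠ e i₀ t) (hkeq : eatenAmt e {e i t} t = eatenAmt e' {e i t} t) :
    e' i t = e i t := by
  by_contra hne
  have hii₀ : i ≠ i₀ := by
    rintro rfl
    exact hk rfl
  have hk' : Available m c e' (e i t) t :=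
    ⟨by rw [CapOK, ← hkeq]; exact (he.2 i t ht).1.1, hglob' _⟩
  have hpref' : P i (e' i t) (e i t) := hPP i hii₀ ▸ (he'.2 i t ht).2 _ hk' (Ne.symm hne)
  have hj : Available m c e (e' i t) t := by
    refine ⟨?_, hglob _⟩
    by_cases hj : e' i t = e i₀ t
    · exact hj ▸ (he.2 i₀ t ht).1.1
    · exact (hle _ hj).trans_lt (he'.2 i t ht).1.1
  exact asymm ((he.2 i t ht).2 _ hj hne) hpref'

theorem IsMPS.eaterCount_le_of_eatenAmt_eq (he : IsMPS m c P e) (he' : IsMPS m c P' e') {i₀ : N}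
    (hPP : ∀ i, i ≠ i₀ → P' i = P i) [∀ i, Std.Asymm (P i)] (ht : t ∈ Set.Ico (0:ℝ) 1)
    (hglob : ∀ j, GlobalOK m e j t) (hglob' : ∀ j, GlobalOK m e' j t)
    (hle : ∀ j, j ≠ e i₀ t → eatenAmt e {j} t ≤ eatenAmt e' {j} t) {k : O}
    (hk : k ≠ e i₀ t) (hkeq : eatenAmt e {k} t = eatenAmt e' {k} t) :
    eaterCount e {k} t ≤ eaterCount e' {k} t := by
  unfold eaterCount
  refine Nat.cast_le.2 (Finset.card_le_card fun i hi => ?_)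
  simp only [Finset.mem_filter, Finset.mem_univ, true_and, Set.mem_singleton_iff] at hi ⊢
  subst hi
  exact he.eq_of_eatenAmt_eq he' hPP ht hglob hglob' hle hk hkeq

theorem IsMPS.eatenAmt_le_of_forall_lt (he : IsMPS m c P e) (he' : IsMPS m c P' e') {i₀ : N}
    (hPP : ∀ i, i ≠ i₀ → P' i = P i) [∀ i, Std.Asymm (P i)] {T : ℝ} (hT : T ≤ 1)
    {a : O} (hi₀ : ∀ t ∈ Set.Ico 0 T, e i₀ t = a)
    (hglob : ∀ t ∈ Set.Ico 0 T, ∀ j, GlobalOK m e j t)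
    (hglob' : ∀ t ∈ Set.Ico 0 T, ∀ j, GlobalOK m e' j t) :
    ∀ t ∈ Set.Icc 0 T, ∀ k, k ≠ a → eatenAmt e {k} t ≤ eatenAmt e' {k} t := by
  refine IsClosed.Icc_subset_of_forall_mem_nhdsWithin ?_ (fun k _ => by simp [eatenAmt]) ?_
  · have hcont : ∀ {f : N → ℝ → O}, (∀ i, RightContStep (f i)) →
        ∀ k : {k // k ≠ a}, ContinuousOn (eatenAmt f {k.1}) (Set.Icc 0 T) :=
      fun hf k => (continuousOn_eatenAmt hf _).mono (Set.Icc_subset_Icc_right hT)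
    convert isClosed_Icc.setOf_forall_le (hcont he.1) (hcont he'.1) using 1
    ext t
    simp only [Set.mem_ofPred_eq, Subtype.forall]
    exact and_comm
  rintro x ⟨hx, hx0, hxT⟩
  have hx1 : x ∈ Set.Ico (0:ℝ) 1 := ⟨hx0, hxT.trans_le hT⟩
  obtain ⟨u, hxu, hu⟩ := mem_nhdsGE_iff_exists_Ico_subset.1
    ((eventually_all.2 fun i => (he.1 i).eventually_eq_nhdsGE hx1).and
      (eventually_all.2 fun i => (he'.1 i).eventually_eq_nhdsGE hx1))
  refine eventually_all.2 fun k => ?_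
  by_cases hka : k = a
  · exact Eventually.of_forall fun _ h => absurd hka h
  rcases (hx k hka).lt_or_eq with hlt | heq
  · exact ((tendsto_eatenAmt_nhdsGT he.1 {k} hx1).eventually_lt
      (tendsto_eatenAmt_nhdsGT he'.1 {k} hx1) hlt).mono fun _ h _ => h.le
  have ha : e i₀ x = a := hi₀ x ⟨hx0, hxT⟩
  have hrate := he.eaterCount_le_of_eatenAmt_eq he' hPP hx1 (hglob x ⟨hx0, hxT⟩)
    (hglob' x ⟨hx0, hxT⟩) (ha ▸ hx) (ha ▸ hka) heq
  filter_upwards [Ioo_mem_nhdsGT (lt_min hxu hx1.2)] with t ht _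
  exact eatenAmt_le_of_eaterCount_le he.1 he'.1 {k} hx0 (min_le_right u 1)
    (fun s hs => hu ⟨hs.1, hs.2.trans_le (min_le_left _ _)⟩) (hx k hka) hrate
    ⟨ht.1.le, ht.2.le⟩

end Misreport

theorem MPS_lemma_sp2_general
    {N O : Type*} [Fintype N] [Fintype O]
    (m c : O → ℕ)
    (hfeasm : ∑ j, m j ≤ Fintype.card N)
    (P : N → O → O → Prop) (hP : ∀ i, IsStrictTotalOrder O (P i))
    (i₀ : N) (a : O) (ha : ∀ j : O, j ≠ a → P i₀ a j)
    (P₁' : O → O → Prop)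
    (P' : N → O → O → Prop)
    (hP' : P' = fun i => if i = i₀ then P₁' else P i)
    (e e' : N → ℝ → O) (he : IsMPS m c P e) (he' : IsMPS m c P' e') :
    globalTime m e < closeTime m c e a → globalTime m e' ≤ globalTime m e := by
  intro hτa
  have : ∀ i, Std.Asymm (P i) := fun i => by have := hP i; infer_instance
  have hPP : ∀ i, i ≠ i₀ → P' i = P i := fun i hi => by simp [hP', hi]
  set τ := globalTime m e
  have hτ1 : τ < 1 := hτa.trans_le firstTime_le_one
  have hτ0 : 0 ≤ τ := firstTime_nonneg
  have havail : ∀ t ∈ Set.Icc 0 τ, Available m c e a t :=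
    fun t ht => available_of_lt_closeTime ht.1 (ht.2.trans_lt hτa)
  obtain ⟨j, hj⟩ : ∃ j, ¬ GlobalOK m e j τ :=
    firstTime_mem (isClosed_setOf_exists_not_globalOK he.1 hfeasm) hτ1
  by_contra! hτ'
  have hacc := he.eatenAmt_le_of_forall_lt he' hPP hτ1.le
    (fun t ht => he.eq_of_available_of_forall_prefers ⟨ht.1, ht.2.trans hτ1⟩ ha
      (havail t (Set.Ico_subset_Icc_self ht)))
    (fun t ht => globalOK_of_lt_globalTime ht.1 ht.2)
    (fun t ht => globalOK_of_lt_globalTime ht.1 (ht.2.trans hτ'))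
  have hτ : τ ∈ Set.Icc 0 τ := ⟨hτ0, le_rfl⟩
  exact hτ'.not_ge (firstTime_le ⟨hτ0, hτ1.le⟩
    ⟨j, not_globalOK_of_eatenAmt_le hj (havail τ hτ).2 (hacc τ hτ)⟩)

/-- Lemma sp2: If agent `i₀`'s favorite object `a` closes
strictly after `τ` in the truthful run, then `τ' ≤ τ`. -/
theorem MPS_lemma_sp2
    {N O : Type*} [Fintype N] [Fintype O] [Nonempty N] [Nonempty O]
    (m c : O → ℕ)
    (hc1 : ∀ j, 1 ≤ c j) (hc2 : ∀ j, c j ≤ Fintype.card N)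
    (hfeasc : Fintype.card N ≤ ∑ j, c j)
    (hfeasm : ∑ j, m j ≤ Fintype.card N)
    (P : N → O → O → Prop) (hP : ∀ i, IsStrictTotalOrder O (P i))
    (i₀ : N) (a : O) (ha : ∀ j : O, j ≠ a → P i₀ a j)
    (P₁' : O → O → Prop) (hP₁' : IsStrictTotalOrder O P₁')
    (P' : N → O → O → Prop)
    (hP' : P' = fun i => if i = i₀ then P₁' else P i)
    (e e' : N → ℝ → O) (he : IsMPS m c P e) (he' : IsMPS m c P' e') :
    globalTime m e < closeTime m c e a → globalTime m e' ≤ globalTime m e :=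
  MPS_lemma_sp2_general m c hfeasm P hP i₀ a ha P₁' P' hP' e e' he he'
end
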